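/- Let y ∈ ℝⁿ, X an n×p real matrix, β ∈ ℝᵖ, and Σ⁻¹ = (1/σ²)I_n − (τ²/(σ²(σ²+nτ²)))𝟙𝟙ᵀ with σ² > 0, τ² ≥ 0. Define S as the (p+1)×(p+1) block matrix with blocks yᵀy, yᵀX, Xᵀy, XᵀX and T the analogous block matrix built from 𝟙𝟙ᵀ, i.e. blocks yᵀ𝟙𝟙ᵀy, yᵀ𝟙𝟙ᵀX, Xᵀ𝟙𝟙ᵀy, Xᵀ𝟙𝟙ᵀX. Then (y − Xβ)ᵀΣ⁻¹(y − Xβ) = (1/σ²)·vᵀ(S − (τ²/(σ²+nτ²))T)v, where v = (1, −β)ᵀ ∈ ℝ^{p+1}. -/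

import Mathlib

open Matrix

/-- the GLS quadratic form equals the summary-based quadratic form
`(1/σ²)·vᵀ(S − (τ²/(σ²+nτ²))T)v` with `v = (1, −β)ᵀ`. -/
theorem quadratic_form_summary (n p : ℕ) (σ2 τ2 : ℝ) (hσ : 0 < σ2) (hτ : 0 ≤ τ2)
    (y : Matrix (Fin n) (Fin 1) ℝ) (X : Matrix (Fin n) (Fin p) ℝ)
    (β : Matrix (Fin p) (Fin 1) ℝ) :
    (y - X * β)ᵀ *
      ((1 / σ2) • (1 : Matrix (Fin n) (Fin n) ℝ)
        - (τ2 / (σ2 * (σ2 + n * τ2))) • (Matrix.of fun _ _ => (1 : ℝ))) *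
      (y - X * β)
    = (1 / σ2) •
      ((Matrix.fromCols (1 : Matrix (Fin 1) (Fin 1) ℝ) (-β)ᵀ) *
        ((Matrix.fromBlocks (yᵀ * y) (yᵀ * X) (Xᵀ * y) (Xᵀ * X))
          - (τ2 / (σ2 + n * τ2)) •
            (Matrix.fromBlocks (yᵀ * (Matrix.of fun _ _ => (1 : ℝ) : Matrix (Fin n) (Fin n) ℝ) * y)
              (yᵀ * (Matrix.of fun _ _ => (1 : ℝ) : Matrix (Fin n) (Fin n) ℝ) * X)
              (Xᵀ * (Matrix.of fun _ _ => (1 : ℝ) : Matrix (Fin n) (Fin n) ℝ) * y)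
              (Xᵀ * (Matrix.of fun _ _ => (1 : ℝ) : Matrix (Fin n) (Fin n) ℝ) * X))) *
        (Matrix.fromRows (1 : Matrix (Fin 1) (Fin 1) ℝ) (-β))) := by
  set J : Matrix (Fin n) (Fin n) ℝ := Matrix.of fun _ _ => (1 : ℝ) with hJ
  set r : Matrix (Fin n) (Fin 1) ℝ := y - X * β with hr
  set c : ℝ := τ2 / (σ2 + n * τ2) with hc
  set v' : Matrix (Fin 1) ((Fin 1 ⊕ Fin p)) ℝ :=
    Matrix.fromCols (1 : Matrix (Fin 1) (Fin 1) ℝ) (-β)ᵀ with hv'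
  set w : Matrix ((Fin 1 ⊕ Fin p)) (Fin 1) ℝ :=
    Matrix.fromRows (1 : Matrix (Fin 1) (Fin 1) ℝ) (-β) with hw'
  set R : Matrix ((Fin 1 ⊕ Fin p)) (Fin n) ℝ := Matrix.fromRows yᵀ Xᵀ with hR
  set C : Matrix (Fin n) ((Fin 1 ⊕ Fin p)) ℝ := Matrix.fromCols y X with hC
  have hS : Matrix.fromBlocks (yᵀ * y) (yᵀ * X) (Xᵀ * y) (Xᵀ * X) = R * C := by
    rw [hR, hC, Matrix.fromRows_mul_fromCols]
  have hT : Matrix.fromBlocks (yᵀ * J * y) (yᵀ * J * X) (Xᵀ * J * y) (Xᵀ * J * X)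
      = R * (J * C) := by
    rw [hR, hC, Matrix.mul_fromCols, Matrix.fromRows_mul_fromCols]
    simp [Matrix.mul_assoc]
  have hv : v' * R = rᵀ := by
    rw [hv', hR, Matrix.fromCols_mul_fromRows, hr, Matrix.transpose_sub,
      Matrix.transpose_mul]
    simp [Matrix.neg_mul, sub_eq_add_neg]
  have hw : C * w = r := by
    rw [hC, hw', Matrix.fromCols_mul_fromRows, hr]
    simp [sub_eq_add_neg]
  have hA : v' * (R * C) * w = rᵀ * r := by
    rw [← Matrix.mul_assoc, hv, Matrix.mul_assoc, hw]
  have hB : v' * (R * (J * C)) * w = rᵀ * (J * r) := by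
    rw [← Matrix.mul_assoc, hv, Matrix.mul_assoc, Matrix.mul_assoc, hw]
  have hRHS : v' * (R * C - c • (R * (J * C))) * w = rᵀ * r - c • (rᵀ * (J * r)) := by
    rw [Matrix.mul_sub, Matrix.mul_smul, Matrix.sub_mul, Matrix.smul_mul, hA, hB]
  have hLHS : ∀ s : Matrix (Fin n) (Fin 1) ℝ, sᵀ * ((1 / σ2) • (1 : Matrix (Fin n) (Fin n) ℝ)
        - (τ2 / (σ2 * (σ2 + n * τ2))) • J) * s
      = (1 / σ2) • (sᵀ * s) - (τ2 / (σ2 * (σ2 + n * τ2))) • (sᵀ * (J * s)) := by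
    intro s
    rw [Matrix.mul_sub, Matrix.mul_smul, Matrix.mul_smul, Matrix.mul_one, Matrix.sub_mul,
      Matrix.smul_mul, Matrix.smul_mul, Matrix.mul_assoc]
  rw [hS, hT, hRHS, hLHS r, smul_sub, smul_smul]
  congr 2
  rw [hc]
  field_simp
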